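/- Let B = (e_n) be a normalized unconditional basis of a Banach space X with unconditional constant M, and let x_0 be an extreme point of the brick K_{B,E}. Then ‖x‖ ≤ M ‖x_0‖ for every x ∈ K_{B,E}. In particular, if the basis is 1-unconditional then ‖x‖ ≤ ‖x_0‖ for every x ∈ K_{B,E}. -/

import Mathlib

open Filter Topology

/-- A (Schauder) basis of a normed space, with biorthogonal coefficient functionals `f`. -/
structure RealSchauderBasis (X : Type*) [NormedAddCommGroup X] [NormedSpace ℝ X] where
  e : ℕ → X
  f : ℕ → X →L[ℝ] ℝ
  biorth : ∀ i j, f i (e j) = if i = j then 1 else 0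
  expansion : ∀ x : X,
    Tendsto (fun N => ∑ n ∈ Finset.range N, f n x • e n) atTop (𝓝 x)

/-- The brick corresponding to a basis `B` and half-heights `ε`. -/
def brick {X : Type*} [NormedAddCommGroup X] [NormedSpace ℝ X]
    (B : RealSchauderBasis X) (ε : ℕ → ℝ) : Set X :=
  {x | ∀ n, |B.f n x| ≤ ε n}

/-- `B` is unconditional with unconditional constant (at most) `M`: for every sign
sequence the corresponding sign-multiplier of every expansion converges and has
norm at most `M` times the norm. -/
def UnconditionalWithConstant {X : Type*} [NormedAddCommGroup X] [NormedSpace ℝ X]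
    (B : RealSchauderBasis X) (M : ℝ) : Prop :=
  ∀ (x : X) (θ : ℕ → ℝ), (∀ n, |θ n| = 1) →
    ∃ s : X, Tendsto (fun N => ∑ n ∈ Finset.range N, (θ n * B.f n x) • B.e n)
        atTop (𝓝 s) ∧ ‖s‖ ≤ M * ‖x‖

/-!
Every partial sum `∑_{n<K} e_n*(x) e_n` of a point `x` of the brick has coefficients bounded by
`|e_n*(x₀)|`, so it lies in the convex hull of the sign-changed partial sums
`∑_{n<K} ±e_n*(x₀) e_n`, and by convexity of the norm it suffices to bound those. Such a sum is
the average of `M_θ x₀` and `M_θ' x₀`, where `θ`, `θ'` carry the given signs below `K` and are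
`1`, resp. `-1`, from `K` on; hence its norm is at most `M ‖x₀‖`. Let `K → ∞`.
-/

open Finset

theorem mem_segment_neg_of_abs_le {a c : ℝ} (h : |c| ≤ |a|) : c ∈ segment ℝ a (-a) := by
  rw [segment_eq_uIcc, Set.mem_uIcc]
  rcases le_total 0 a with ha | ha
  · rw [abs_of_nonneg ha, abs_le] at h
    exact Or.inr h
  · rw [abs_of_nonpos ha, abs_le, neg_neg] at h
    exact Or.inl h

theorem norm_sum_smul_le_of_forall_signs {ι X : Type*} [Fintype ι] [NormedAddCommGroup X]
    [NormedSpace ℝ X] (v : ι → X) {a c : ι → ℝ} {C : ℝ} (hc : ∀ i, |c i| ≤ |a i|)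
    (h : ∀ σ : ι → ℝ, (∀ i, |σ i| = 1) → ‖∑ i, (σ i * a i) • v i‖ ≤ C) :
    ‖∑ i, c i • v i‖ ≤ C := by
  have hconv : ConvexOn ℝ Set.univ fun t : ι → ℝ => ‖∑ i, t i • v i‖ := by
    simpa [Function.comp_def, Fintype.linearCombination_apply] using
      convexOn_univ_norm.comp_linearMap (Fintype.linearCombination ℝ v)
  have hmem : c ∈ convexHull ℝ (Set.univ.pi fun i => {a i, -a i}) := by
    rw [convexHull_pi]
    intro i _
    simpa only [convexHull_pair] using mem_segment_neg_of_abs_le (hc i)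
  obtain ⟨y, hy, hcy⟩ := hconv.exists_ge_of_mem_convexHull (Set.subset_univ _) hmem
  choose σ hσ hσy using fun i => show ∃ s : ℝ, |s| = 1 ∧ y i = s * a i by
    obtain h | h : y i = a i ∨ y i = -a i := hy i trivial
    · exact ⟨1, by simp, by simp [h]⟩
    · exact ⟨-1, by simp, by simp [h]⟩
  calc ‖∑ i, c i • v i‖ ≤ ‖∑ i, y i • v i‖ := hcy
    _ = ‖∑ i, (σ i * a i) • v i‖ := by simp_rw [hσy]
    _ ≤ C := h σ hσ

theorem sum_range_ite_one_add_sum_range_ite_neg_one {X : Type*} [AddCommGroup X] [Module ℝ X]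
    (v : ℕ → X) {a σ : ℕ → ℝ} {K N : ℕ} (hKN : K ≤ N) :
    ∑ n ∈ range N, ((if n < K then σ n else 1) * a n) • v n
      + ∑ n ∈ range N, ((if n < K then σ n else -1) * a n) • v n
      = (2 : ℝ) • ∑ n ∈ range K, (σ n * a n) • v n := by
  rw [← sum_add_distrib, ← sum_range_add_sum_Ico _ hKN, smul_sum]
  have hhead : ∀ n ∈ range K, ((if n < K then σ n else 1) * a n) • v n
      + ((if n < K then σ n else -1) * a n) • v n = (2 : ℝ) • (σ n * a n) • v n := by
    intro n hn
    rw [if_pos (mem_range.mp hn), if_pos (mem_range.mp hn)]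
    module
  have htail : ∀ n ∈ Ico K N, ((if n < K then σ n else 1) * a n) • v n
      + ((if n < K then σ n else -1) * a n) • v n = 0 := by
    intro n hn
    rw [if_neg (mem_Ico.mp hn).1.not_gt, if_neg (mem_Ico.mp hn).1.not_gt]
    module
  rw [sum_congr rfl hhead, sum_congr rfl htail, sum_const_zero, add_zero]

namespace RealSchauderBasis

variable {X : Type*} [NormedAddCommGroup X] [NormedSpace ℝ X] (B : RealSchauderBasis X)

theorem norm_sum_range_sign_mul_le {M : ℝ} (hunc : UnconditionalWithConstant B M) (x : X)
    {σ : ℕ → ℝ} (hσ : ∀ n, |σ n| = 1) (K : ℕ) :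
    ‖∑ n ∈ range K, (σ n * B.f n x) • B.e n‖ ≤ M * ‖x‖ := by
  have hsign : ∀ c : ℝ, |c| = 1 → ∀ n, |if n < K then σ n else c| = 1 := fun c hc n => by
    split_ifs
    exacts [hσ n, hc]
  obtain ⟨s, hs, hsM⟩ := hunc x _ (hsign 1 abs_one)
  obtain ⟨s', hs', hs'M⟩ := hunc x _ (hsign (-1) (by simp))
  have hsum : (2 : ℝ) • ∑ n ∈ range K, (σ n * B.f n x) • B.e n = s + s' :=
    tendsto_nhds_unique (tendsto_const_nhds.congr' <| (eventually_ge_atTop K).mono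
      fun N hN => (sum_range_ite_one_add_sum_range_ite_neg_one B.e hN).symm) (hs.add hs')
  have h2 : 2 * ‖∑ n ∈ range K, (σ n * B.f n x) • B.e n‖ ≤ 2 * (M * ‖x‖) := by
    calc 2 * ‖∑ n ∈ range K, (σ n * B.f n x) • B.e n‖ = ‖s + s'‖ := by
          rw [← hsum, norm_smul, Real.norm_two]
      _ ≤ ‖s‖ + ‖s'‖ := norm_add_le _ _
      _ ≤ 2 * (M * ‖x‖) := by linarith
  linarith

end RealSchauderBasis

theorem stmt8_general (X : Type*) [NormedAddCommGroup X] [NormedSpace ℝ X]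
    (B : RealSchauderBasis X)
    (M : ℝ) (hunc : UnconditionalWithConstant B M)
    (ε : ℕ → ℝ)
    (x₀ : X) (hx₀ : ∀ n, |B.f n x₀| = ε n) :
    ∀ x ∈ brick B ε, ‖x‖ ≤ M * ‖x₀‖ := by
  intro x hx
  refine le_of_tendsto (B.expansion x).norm (Eventually.of_forall fun K => ?_)
  rw [sum_range]
  refine norm_sum_smul_le_of_forall_signs _ (fun i => (hx₀ i).symm ▸ hx i) fun σ hσ => ?_
  let σ' : ℕ → ℝ := fun n => if h : n < K then σ ⟨n, h⟩ else 1
  have hσ' : ∀ n, |σ' n| = 1 := fun n => by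
    unfold σ'
    split_ifs
    exacts [hσ _, abs_one]
  simpa [σ', sum_range] using B.norm_sum_range_sign_mul_le hunc x₀ hσ' K

theorem stmt8 (X : Type*) [NormedAddCommGroup X] [NormedSpace ℝ X] [CompleteSpace X]
    (B : RealSchauderBasis X) (hnorm : ∀ n, ‖B.e n‖ = 1)
    (M : ℝ) (hunc : UnconditionalWithConstant B M)
    (ε : ℕ → ℝ) (hε : ∀ n, 0 ≤ ε n)
    (x₀ : X) (hx₀ : ∀ n, |B.f n x₀| = ε n) :
    ∀ x ∈ brick B ε, ‖x‖ ≤ M * ‖x₀‖ :=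
  stmt8_general X B M hunc ε x₀ hx₀
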